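/- arXiv:2006.11533 — 2 statements merged into one kernel-verified Lean document; each statement's English description precedes it below -/
import Mathlib

section
/- Let $A^1,\dots,A^N : [0,\infty) \to \mathbb{R}^{d\times d}$ be $C^2$ matrix-valued curves solving $m(\ddot A^i (A^i)^T + \dot A^i(\dot A^i)^T) = -\gamma \dot A^i (A^i)^T + \frac{\kappa}{2N}\sum_{j=1}^N (A^j (A^i)^T - A^i (A^j)^T)$ with $m,\gamma > 0$, subject to initial constraints $A^i(0)(A^i(0))^T = I_d$ and $\dot A^i(0)(A^i(0))^T + A^i(0)(\dot A^i(0))^T = 0$. Then for each $i$, the matrix $M^i := A^i (A^i)^T$ satisfies the ODE $m\ddot M^i = -\gamma \dot M^i$. -/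
open Matrix

attribute [local instance] Matrix.frobeniusNormedAddCommGroup Matrix.frobeniusNormedSpace

/-!
Differentiating `Mⁱ = Aⁱ(Aⁱ)ᵀ` twice gives `M̈ⁱ = Xⁱ + (Xⁱ)ᵀ` with `Xⁱ = Äⁱ(Aⁱ)ᵀ + Ȧⁱ(Ȧⁱ)ᵀ`,
the left-hand side of the Lohe equation. Adding that equation to its transpose, the coupling term
drops out because it is skew-symmetric, and what remains is `m M̈ⁱ = -γ Ṁⁱ`.
-/

section Calculus

variable {𝕜 : Type*} [RCLike 𝕜]

theorem HasDerivAt.matrix_transpose {m n : Type*} [Fintype m] [Fintype n]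
    {f : 𝕜 → Matrix m n 𝕜} {f' : Matrix m n 𝕜} {t : 𝕜} (hf : HasDerivAt f f' t) :
    HasDerivAt (fun s => (f s)ᵀ) f'ᵀ t :=
  (transposeLinearEquiv m n 𝕜 𝕜).toLinearMap.toContinuousLinearMap.hasFDerivAt.comp_hasDerivAt
    t hf

/- `HasDerivAt.fun_add` and `HasDerivAt.fun_mul` return terms carrying the Frobenius-norm
instances, while `deriv` and `+`, `*` on matrices elaborate with the plain `Matrix` ones; these
restatements switch back to the latter so that `rw` and `abel` can match the results. -/
theorem HasDerivAt.matrix_add {m n : Type*} [Fintype m] [Fintype n] {f g : 𝕜 → Matrix m n 𝕜}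
    {f' g' : Matrix m n 𝕜} {t : 𝕜} (hf : HasDerivAt f f' t) (hg : HasDerivAt g g' t) :
    HasDerivAt (fun s => f s + g s) (f' + g') t :=
  hf.fun_add hg

variable {n : Type*} [Fintype n] [DecidableEq n] {f : 𝕜 → Matrix n n 𝕜}

theorem HasDerivAt.matrix_mul {g : 𝕜 → Matrix n n 𝕜} {f' g' : Matrix n n 𝕜} {t : 𝕜}
    (hf : HasDerivAt f f' t) (hg : HasDerivAt g g' t) :
    HasDerivAt (fun s => f s * g s) (f' * g t + f t * g') t :=
  letI := frobeniusNormedRing (m := n) (α := 𝕜)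
  letI := frobeniusNormedAlgebra (m := n) (α := 𝕜) (R := 𝕜)
  hf.fun_mul hg

theorem HasDerivAt.mul_transpose_self {f' : Matrix n n 𝕜} {t : 𝕜} (hf : HasDerivAt f f' t) :
    HasDerivAt (fun s => f s * (f s)ᵀ) (f' * (f t)ᵀ + f t * f'ᵀ) t :=
  hf.matrix_mul hf.matrix_transpose

theorem deriv_mul_transpose_self (hf : Differentiable 𝕜 f) :
    deriv (fun s => f s * (f s)ᵀ) = fun s => deriv f s * (f s)ᵀ + f s * (deriv f s)ᵀ :=
  funext fun s => (hf s).hasDerivAt.mul_transpose_self.deriv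

theorem HasDerivAt.mul_transpose_add_mul_transpose {f' : 𝕜 → Matrix n n 𝕜}
    {f'' : Matrix n n 𝕜} {t : 𝕜} (hf : HasDerivAt f (f' t) t) (hf' : HasDerivAt f' f'' t) :
    HasDerivAt (fun s => f' s * (f s)ᵀ + f s * (f' s)ᵀ)
      ((f'' * (f t)ᵀ + f' t * (f' t)ᵀ) + (f'' * (f t)ᵀ + f' t * (f' t)ᵀ)ᵀ) t := by
  convert (hf'.matrix_mul hf.matrix_transpose).matrix_add (hf.matrix_mul hf'.matrix_transpose)
    using 1
  simp only [transpose_add, transpose_mul, transpose_transpose]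
  abel

theorem deriv_deriv_mul_transpose_self (hf : Differentiable 𝕜 f) {t : 𝕜}
    (hf' : DifferentiableAt 𝕜 (deriv f) t) :
    deriv (deriv (fun s => f s * (f s)ᵀ)) t =
      (deriv (deriv f) t * (f t)ᵀ + deriv f t * (deriv f t)ᵀ) +
        (deriv (deriv f) t * (f t)ᵀ + deriv f t * (deriv f t)ᵀ)ᵀ := by
  rw [deriv_mul_transpose_self hf]
  exact ((hf t).hasDerivAt.mul_transpose_add_mul_transpose hf'.hasDerivAt).deriv

end Calculus

section SkewPart

variable {R n : Type*} [CommRing R]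

theorem add_transpose_smul_eq_of_smul_eq_add_skew {c γ : R} {X Y S : Matrix n n R}
    (h : c • X = -γ • Y + S) (hS : Sᵀ = -S) :
    c • (X + Xᵀ) = -γ • (Y + Yᵀ) := by
  have hT : c • Xᵀ = -γ • Yᵀ - S := by
    rw [← transpose_smul, h, transpose_add, transpose_smul, hS, sub_eq_add_neg]
  rw [smul_add, h, hT, smul_add]
  abel

theorem transpose_smul_sum_mul_transpose_sub [Fintype n] {ι : Type*} [Fintype ι] (c : R)
    (B : ι → Matrix n n R) (i : ι) :
    (c • ∑ j, (B j * (B i)ᵀ - B i * (B j)ᵀ))ᵀ =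
      -(c • ∑ j, (B j * (B i)ᵀ - B i * (B j)ᵀ)) := by
  simp only [transpose_smul, transpose_sum, transpose_sub, transpose_mul, transpose_transpose,
    ← smul_neg, ← Finset.sum_neg_distrib, neg_sub]

end SkewPart

theorem stmt3_general (d N : ℕ) (A : Fin N → ℝ → Matrix (Fin d) (Fin d) ℝ)
    (m γ κ : ℝ)
    (hsmooth : ∀ i, ContDiff ℝ 2 (A i))
    (hODE : ∀ i, ∀ t : ℝ, 0 ≤ t →
      m • (deriv (deriv (A i)) t * (A i t)ᵀ + deriv (A i) t * (deriv (A i) t)ᵀ) =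
        -γ • (deriv (A i) t * (A i t)ᵀ) +
          (κ / (2 * N)) • ∑ j : Fin N, (A j t * (A i t)ᵀ - A i t * (A j t)ᵀ)) :
    ∀ i, ∀ t : ℝ, 0 ≤ t →
      m • deriv (deriv (fun s => A i s * (A i s)ᵀ)) t =
        -γ • deriv (fun s => A i s * (A i s)ᵀ) t := by
  intro i t ht
  have hA := (hsmooth i).differentiable two_ne_zero
  rw [deriv_deriv_mul_transpose_self hA ((hsmooth i).differentiable_deriv_two t),
    deriv_mul_transpose_self hA, add_transpose_smul_eq_of_smul_eq_add_skew (hODE i t ht)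
      (transpose_smul_sum_mul_transpose_sub _ (fun j => A j t) i),
    transpose_mul, transpose_transpose]

/-- along the second-order Lohe matrix flow, `Mⁱ = Aⁱ(Aⁱ)ᵀ` solves
`m M̈ⁱ = -γ Ṁⁱ`. -/
theorem stmt3 (d N : ℕ) (A : Fin N → ℝ → Matrix (Fin d) (Fin d) ℝ)
    (m γ κ : ℝ) (hm : 0 < m) (hγ : 0 < γ)
    (hsmooth : ∀ i, ContDiff ℝ 2 (A i))
    (hODE : ∀ i, ∀ t : ℝ, 0 ≤ t →
      m • (deriv (deriv (A i)) t * (A i t)ᵀ + deriv (A i) t * (deriv (A i) t)ᵀ) =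
        -γ • (deriv (A i) t * (A i t)ᵀ) +
          (κ / (2 * N)) • ∑ j : Fin N, (A j t * (A i t)ᵀ - A i t * (A j t)ᵀ))
    (hinit1 : ∀ i, A i 0 * (A i 0)ᵀ = 1)
    (hinit2 : ∀ i, deriv (A i) 0 * (A i 0)ᵀ + A i 0 * (deriv (A i) 0)ᵀ = 0) :
    ∀ i, ∀ t : ℝ, 0 ≤ t →
      m • deriv (deriv (fun s => A i s * (A i s)ᵀ)) t =
        -γ • deriv (fun s => A i s * (A i s)ᵀ) t :=
  stmt3_general d N A m γ κ hsmooth hODE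
end

section
/- Let $O^1,\dots,O^N : [0,\infty)\to SO(d)$ be smooth curves, $A^i(t)\in\mathbb{R}^{d\times d}$ symmetric matrices, and suppose $m\ddot O^i + \gamma\dot O^i - \frac{\kappa}{N}\sum_{k=1}^N (O^k - O^i) - A^i O^i = 0$ holds for each $i$. Then $A^i = -m\,\dot O^i(\dot O^i)^T - \frac{\kappa}{2N}\sum_{k=1}^N\big(O^k(O^i)^T + O^i(O^k)^T - 2I_d\big)$. -/
open scoped BigOperators
open Matrix

attribute [local instance] Matrix.frobeniusNormedAddCommGroup Matrix.frobeniusNormedSpace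
attribute [local instance] Matrix.frobeniusNormedRing Matrix.frobeniusNormedAlgebra

/-!
Right-multiplying the equation of motion by `(Oⁱ)ᵀ` gives `Aⁱ = (Aⁱ Oⁱ)(Oⁱ)ᵀ`, and since `Aⁱ` is
symmetric, `2 Aⁱ = (Aⁱ Oⁱ)(Oⁱ)ᵀ + Oⁱ (Aⁱ Oⁱ)ᵀ`. Substituting `Aⁱ Oⁱ` from the equation, the
friction term drops out by the first derivative of `Oⁱ (Oⁱ)ᵀ = I`, the inertial term becomes
`-2m Ȯⁱ (Ȯⁱ)ᵀ` by the second derivative, and the coupling term symmetrises to the stated sum.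
-/

namespace Matrix

variable {n : Type*} [Fintype n] [DecidableEq n]

theorem two_smul_eq_mul_transpose_add_of_mul_transpose_eq_one {A P : Matrix n n ℝ}
    (hA : Aᵀ = A) (hP : P * Pᵀ = 1) : (2 : ℝ) • A = A * P * Pᵀ + P * (A * P)ᵀ := by
  rw [mul_assoc, hP, transpose_mul, hA, ← mul_assoc, hP]
  simp only [mul_one, one_mul, two_smul]

theorem hasDerivAt_mul_transpose {f g : ℝ → Matrix n n ℝ} {f' g' : Matrix n n ℝ} {t : ℝ}
    (hf : HasDerivAt f f' t) (hg : HasDerivAt g g' t) :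
    HasDerivAt (fun u => f u * (g u)ᵀ) (f' * (g t)ᵀ + f t * g'ᵀ) t := by
  let T : Matrix n n ℝ →L[ℝ] Matrix n n ℝ :=
    LinearMap.toContinuousLinearMap (transposeLinearEquiv n n ℝ ℝ).toLinearMap
  exact hf.mul (T.hasFDerivAt.comp_hasDerivAt t hg)

variable {O : ℝ → Matrix n n ℝ}

theorem deriv_mul_transpose_add_eq_zero (hO : ∀ u, O u * (O u)ᵀ = 1) (hd : Differentiable ℝ O)
    (t : ℝ) : deriv O t * (O t)ᵀ + O t * (deriv O t)ᵀ = 0 := by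
  have h := hasDerivAt_mul_transpose (hd t).hasDerivAt (hd t).hasDerivAt
  simp only [hO] at h
  exact h.unique (hasDerivAt_const t 1)

theorem deriv_deriv_mul_transpose_add (hO : ∀ u, O u * (O u)ᵀ = 1) (hO₂ : ContDiff ℝ 2 O)
    (t : ℝ) : deriv (deriv O) t * (O t)ᵀ + O t * (deriv (deriv O) t)ᵀ
      = -(2 : ℝ) • (deriv O t * (deriv O t)ᵀ) := by
  have hd : Differentiable ℝ O := hO₂.differentiable two_ne_zero
  have hd' : Differentiable ℝ (deriv O) :=
    ((contDiff_succ_iff_deriv (n := 1)).mp hO₂).2.2.differentiable one_ne_zero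
  have h : HasDerivAt (fun u => deriv O u * (O u)ᵀ + O u * (deriv O u)ᵀ) _ t :=
    (hasDerivAt_mul_transpose (hd' t).hasDerivAt (hd t).hasDerivAt).add
      (hasDerivAt_mul_transpose (hd t).hasDerivAt (hd' t).hasDerivAt)
  simp only [deriv_mul_transpose_add_eq_zero hO hd] at h
  have h0 : deriv (deriv O) t * (O t)ᵀ + deriv O t * (deriv O t)ᵀ
      + (deriv O t * (deriv O t)ᵀ + O t * (deriv (deriv O) t)ᵀ) = 0 :=
    h.unique (hasDerivAt_const t 0)
  linear_combination (norm := module) h0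

theorem sum_sub_mul_transpose_add {ι : Type*} (s : Finset ι) (Q : ι → Matrix n n ℝ)
    {P : Matrix n n ℝ} (hP : P * Pᵀ = 1) :
    (∑ k ∈ s, (Q k - P)) * Pᵀ + P * (∑ k ∈ s, (Q k - P))ᵀ
      = ∑ k ∈ s, (Q k * Pᵀ + P * (Q k)ᵀ - (2 : ℝ) • 1) := by
  rw [transpose_sum, Finset.sum_mul, Finset.mul_sum, ← Finset.sum_add_distrib]
  refine Finset.sum_congr rfl fun k _ => ?_
  rw [transpose_sub, Matrix.sub_mul, Matrix.mul_sub, hP]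
  module

theorem eq_neg_smul_mul_transpose_sub_of_mul_eq {A P P' P'' S : Matrix n n ℝ} {m γ c : ℝ}
    (hA : Aᵀ = A) (hP : P * Pᵀ = 1) (h₁ : P' * Pᵀ + P * P'ᵀ = 0)
    (h₂ : P'' * Pᵀ + P * P''ᵀ = -(2 : ℝ) • (P' * P'ᵀ))
    (hAP : A * P = m • P'' + γ • P' - c • S) :
    A = -m • (P' * P'ᵀ) - (c / 2) • (S * Pᵀ + P * Sᵀ) :=
  calc A = (1 / 2 : ℝ) • ((2 : ℝ) • A) := by module
    _ = (1 / 2 : ℝ) • (A * P * Pᵀ + P * (A * P)ᵀ) := by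
      rw [two_smul_eq_mul_transpose_add_of_mul_transpose_eq_one hA hP]
    _ = (1 / 2 : ℝ) • (m • (P'' * Pᵀ + P * P''ᵀ) + γ • (P' * Pᵀ + P * P'ᵀ)
          - c • (S * Pᵀ + P * Sᵀ)) := by
      simp only [hAP, transpose_add, transpose_sub, transpose_smul, Matrix.add_mul,
        Matrix.sub_mul, Matrix.mul_add, Matrix.mul_sub, Matrix.smul_mul, Matrix.mul_smul]
      module
    _ = _ := by
      rw [h₁, h₂]
      module

end Matrix

/-- the symmetric multiplier `Aⁱ` in the constrained Newton
equations on `SO(d)` is given explicitly. -/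
theorem stmt9 (d N : ℕ) (O : Fin N → ℝ → Matrix (Fin d) (Fin d) ℝ)
    (A : Fin N → ℝ → Matrix (Fin d) (Fin d) ℝ)
    (m γ κ : ℝ)
    (hsmooth : ∀ i, ContDiff ℝ 2 (O i))
    (hSO : ∀ i t, O i t * (O i t)ᵀ = 1 ∧ (O i t).det = 1)
    (hsym : ∀ i t, (A i t)ᵀ = A i t)
    (heq : ∀ i, ∀ t : ℝ, 0 ≤ t →
      m • deriv (deriv (O i)) t + γ • deriv (O i) t
        - (κ / N) • (∑ k : Fin N, (O k t - O i t)) - A i t * O i t = 0) :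
    ∀ i, ∀ t : ℝ, 0 ≤ t →
      A i t = -m • (deriv (O i) t * (deriv (O i) t)ᵀ)
        - (κ / (2 * N)) • ∑ k : Fin N,
            (O k t * (O i t)ᵀ + O i t * (O k t)ᵀ - (2 : ℝ) • (1 : Matrix (Fin d) (Fin d) ℝ)) := by
  intro i t ht
  have hO : ∀ u, O i u * (O i u)ᵀ = 1 := fun u => (hSO i u).1
  have hAP : A i t * O i t = m • deriv (deriv (O i)) t + γ • deriv (O i) t
      - (κ / N) • ∑ k : Fin N, (O k t - O i t) := by
    linear_combination (norm := module) -heq i t ht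
  rw [eq_neg_smul_mul_transpose_sub_of_mul_eq (hsym i t) (hO t)
      (deriv_mul_transpose_add_eq_zero hO ((hsmooth i).differentiable two_ne_zero) t)
      (deriv_deriv_mul_transpose_add hO (hsmooth i) t) hAP,
    sum_sub_mul_transpose_add _ _ (hO t), div_div, mul_comm (N : ℝ)]
end
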